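/- arXiv:1404.7571 — 3 statements merged into one kernel-verified Lean document; each statement's English description precedes it below -/
import Mathlib

section
/- Let ε be a real with 0 < ε ≤ 1, let W > 0 and Ŵ > 0 be reals, let f be a real with 0 ≤ f ≤ W, and let Ŵe ≥ 0 be a real. If |f − Ŵe| ≤ (ε/6)·W and |W − Ŵ| ≤ (ε/5)·W, then |Ŵe/Ŵ − f/W| ≤ ε/2. -/
/-! Splitting `We / Wh - f / W = (We - f) / Wh + (f / W) · (W - Wh) / Wh` bounds the error by
`(ε/6 + ε/5) · W / Wh`, using `f / W ≤ 1`; and `|W - Wh| ≤ (ε/5) W ≤ W / 5` gives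
`W / Wh ≤ 5 / 4`, so the error is at most `(11/30) · (5/4) · ε < ε / 2`. -/

lemma div_sub_div_eq_sub_div_add_div_mul {a b x y : ℝ} (hx : x ≠ 0) (hy : y ≠ 0) :
    a / x - b / y = (a - b) / x + b / y * ((y - x) / x) := by
  field_simp
  ring

lemma abs_div_sub_div_le_of_abs_sub_le {a b x y δ η : ℝ} (hx : 0 < x) (hy : 0 < y)
    (hb : 0 ≤ b) (hby : b ≤ y) (hab : |b - a| ≤ δ * y) (hxy : |y - x| ≤ η * y) :
    |a / x - b / y| ≤ (δ + η) * (y / x) := by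
  have hratio : b / y ≤ 1 := (div_le_one hy).mpr hby
  rw [div_sub_div_eq_sub_div_add_div_mul hx.ne' hy.ne']
  calc |(a - b) / x + b / y * ((y - x) / x)|
      ≤ |(a - b) / x| + |b / y * ((y - x) / x)| := abs_add_le _ _
    _ = |b - a| / x + b / y * (|y - x| / x) := by
        rw [abs_div, abs_mul, abs_div, abs_div, abs_sub_comm a b, abs_of_pos hx,
          abs_of_nonneg hb, abs_of_pos hy]
    _ ≤ δ * y / x + 1 * (η * y / x) := by gcongr
    _ = (δ + η) * (y / x) := by ring

theorem stmt_0_general (ε W Wh f We : ℝ) (hε0 : 0 < ε) (hε1 : ε ≤ 1)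
    (hW : 0 < W) (hWh : 0 < Wh) (hf0 : 0 ≤ f) (hfW : f ≤ W)
    (h1 : |f - We| ≤ (ε / 6) * W) (h2 : |W - Wh| ≤ (ε / 5) * W) :
    |We / Wh - f / W| ≤ ε / 2 := by
  have hWh_lower : (4 / 5) * W ≤ Wh := by nlinarith [(abs_le.mp h2).2]
  calc |We / Wh - f / W| ≤ (ε / 6 + ε / 5) * (W / Wh) :=
        abs_div_sub_div_le_of_abs_sub_le hWh hW hf0 hfW h1 h2
    _ ≤ ε / 2 := by
        rw [mul_div_assoc', div_le_iff₀ hWh]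
        nlinarith

/-- The key inequality of Lemma 1: an additive `(ε/6)·W`-accurate frequency estimate `We`
together with an `(ε/5)·W`-accurate total-weight estimate `Wh` yields an `ε/2`-accurate
estimate of the relative frequency `f / W`. -/
theorem stmt_0 (ε W Wh f We : ℝ) (hε0 : 0 < ε) (hε1 : ε ≤ 1)
    (hW : 0 < W) (hWh : 0 < Wh) (hf0 : 0 ≤ f) (hfW : f ≤ W) (hWe : 0 ≤ We)
    (h1 : |f - We| ≤ (ε / 6) * W) (h2 : |W - Wh| ≤ (ε / 5) * W) :
    |We / Wh - f / W| ≤ ε / 2 :=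
  stmt_0_general ε W Wh f We hε0 hε1 hW hWh hf0 hfW h1 h2
end

section
/- Let ε be a real with 0 < ε ≤ 1, let φ ∈ [0,1], let W > 0 and Ŵ > 0 be reals, let f be a real with 0 ≤ f ≤ W, and let Ŵe ≥ 0 be a real satisfying |f − Ŵe| ≤ (ε/6)·W and |W − Ŵ| ≤ (ε/5)·W. Then: (a) if f ≥ φ·W then Ŵe/Ŵ ≥ φ − ε/2; and (b) if Ŵe/Ŵ ≥ φ − ε/2 then f ≥ (φ − ε)·W. -/
/-!
Write `τ = φ - ε/2` for the threshold. If `τ < 0` both parts are immediate from nonnegativity.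
Otherwise `0 ≤ τ ≤ 1`, so replacing `Wh` by `W` in `τ * Wh` costs at most the error `(ε/5)·W`
of `Wh`; together with the error `(ε/6)·W` of `We` the test `τ * Wh ≤ We` is off from
`τ * W ≤ f` by at most `(11/30)·ε·W`, which fits in the margin `ε/2·W` on either side.
-/

lemma abs_mul_sub_mul_le_of_le_one {τ x y c : ℝ} (hτ0 : 0 ≤ τ) (hτ1 : τ ≤ 1)
    (h : |x - y| ≤ c) : |τ * x - τ * y| ≤ c := by
  rw [← mul_sub, abs_mul, abs_of_nonneg hτ0]
  exact (mul_le_of_le_one_left (abs_nonneg _) hτ1).trans h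

section ThresholdTest

variable {τ W Wh f We a b : ℝ}

lemma le_div_of_abs_sub_le (hτ0 : 0 ≤ τ) (hτ1 : τ ≤ 1) (hWh : 0 < Wh)
    (hf : |f - We| ≤ a) (hW : |W - Wh| ≤ b) (h : τ * W + a + b ≤ f) : τ ≤ We / Wh := by
  rw [le_div_iff₀ hWh]
  have hτW := abs_mul_sub_mul_le_of_le_one hτ0 hτ1 hW
  rw [abs_le] at hf hτW
  linarith [hf.2, hτW.1]

lemma sub_le_of_le_div_of_abs_sub_le (hτ0 : 0 ≤ τ) (hτ1 : τ ≤ 1) (hWh : 0 < Wh)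
    (hf : |f - We| ≤ a) (hW : |W - Wh| ≤ b) (h : τ ≤ We / Wh) : τ * W - a - b ≤ f := by
  rw [le_div_iff₀ hWh] at h
  have hτW := abs_mul_sub_mul_le_of_le_one hτ0 hτ1 hW
  rw [abs_le] at hf hτW
  linarith [hf.1, hτW.2]

end ThresholdTest

theorem stmt_1_general (ε φ W Wh f We : ℝ) (hε0 : 0 < ε)
    (hφ1 : φ ≤ 1)
    (hW : 0 < W) (hWh : 0 < Wh) (hf0 : 0 ≤ f) (hWe : 0 ≤ We)
    (h1 : |f - We| ≤ (ε / 6) * W) (h2 : |W - Wh| ≤ (ε / 5) * W) :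
    (f ≥ φ * W → We / Wh ≥ φ - ε / 2) ∧
    (We / Wh ≥ φ - ε / 2 → f ≥ (φ - ε) * W) := by
  have hεW : 0 < ε * W := mul_pos hε0 hW
  rcases lt_or_ge (φ - ε / 2) 0 with hτ | hτ
  · refine ⟨fun _ => (div_nonneg hWe hWh.le).trans' hτ.le, fun _ => ?_⟩
    have : (φ - ε) * W ≤ 0 := mul_nonpos_of_nonpos_of_nonneg (by linarith) hW.le
    linarith
  have hτ1 : φ - ε / 2 ≤ 1 := by linarith
  constructor
  · intro hheavy
    exact le_div_of_abs_sub_le hτ hτ1 hWh h1 h2 (by linarith)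
  · intro hreturned
    have := sub_le_of_le_div_of_abs_sub_le hτ hτ1 hWh h1 h2 hreturned
    linarith

/-- Heavy-hitter classification guarantee of Lemma 1: (a) every true `φ`-heavy hitter is
returned by the threshold test `We / Wh ≥ φ - ε/2`, and (b) every returned element has
true frequency at least `(φ - ε)·W`. -/
theorem stmt_1 (ε φ W Wh f We : ℝ) (hε0 : 0 < ε) (hε1 : ε ≤ 1)
    (hφ0 : 0 ≤ φ) (hφ1 : φ ≤ 1)
    (hW : 0 < W) (hWh : 0 < Wh) (hf0 : 0 ≤ f) (hfW : f ≤ W) (hWe : 0 ≤ We)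
    (h1 : |f - We| ≤ (ε / 6) * W) (h2 : |W - Wh| ≤ (ε / 5) * W) :
    (f ≥ φ * W → We / Wh ≥ φ - ε / 2) ∧
    (We / Wh ≥ φ - ε / 2 → f ≥ (φ - ε) * W) :=
  stmt_1_general ε φ W Wh f We hε0 hφ1 hW hWh hf0 hWe h1 h2
end

section
/- Let ε ≥ 0 and m ≥ 1. Let B be a real ℓ × d matrix and B_1,…,B_m real matrices each with d columns, and let A be the matrix whose rows are the rows of B together with all rows of B_1,…,B_m (stacked). Suppose that for each j ∈ {1,…,m}, every eigenvalue of the symmetric matrix B_jᵀB_j is at most (ε/m)·‖A‖_F². Then for every x ∈ ℝ^d with ‖x‖ = 1: ‖A x‖² − ε·‖A‖_F² ≤ ‖B x‖² ≤ ‖A x‖². -/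
/-!
Splitting the rows of `A` gives `‖Ax‖² = ‖Bx‖² + Σⱼ ‖Bⱼx‖²`, so the upper bound is immediate.
For the lower bound, `‖Bⱼx‖² = xᵀ(BⱼᵀBⱼ)x` is at most the top eigenvalue of `BⱼᵀBⱼ` on a unit
vector, hence at most `(ε/m)‖A‖_F²`, and the `m` sites together lose at most `ε‖A‖_F²`.
-/

open Matrix
open scoped MatrixOrder

namespace Matrix

variable {m n : Type*} [Fintype m] [Fintype n]

theorem IsHermitian.le_algebraMap_of_eigenvalues_le {𝕜 : Type*} [RCLike 𝕜] [DecidableEq n]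
    {M : Matrix n n 𝕜} (hM : M.IsHermitian) {c : ℝ} (hc : ∀ i, hM.eigenvalues i ≤ c) :
    M ≤ algebraMap ℝ _ c := by
  refine le_algebraMap_of_spectrum_le fun r hr => ?_
  obtain ⟨i, rfl⟩ := hM.spectrum_real_eq_range_eigenvalues ▸ hr
  exact hc i

theorem dotProduct_mulVec_le_of_le_algebraMap [DecidableEq n] {M : Matrix n n ℝ} {c : ℝ}
    (h : M ≤ algebraMap ℝ _ c) (x : n → ℝ) : x ⬝ᵥ M *ᵥ x ≤ c * (x ⬝ᵥ x) := by
  have := (le_iff.mp h).dotProduct_mulVec_nonneg x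
  rwa [star_trivial, sub_mulVec, Algebra.algebraMap_eq_smul_one, smul_mulVec, one_mulVec,
    dotProduct_sub, dotProduct_smul, smul_eq_mul, sub_nonneg] at this

theorem sum_mulVec_sq_eq_dotProduct (B : Matrix m n ℝ) (x : n → ℝ) :
    ∑ i, (B *ᵥ x) i ^ 2 = x ⬝ᵥ (Bᵀ * B) *ᵥ x := by
  rw [← mulVec_mulVec, dotProduct_mulVec, vecMul_transpose]
  simp only [dotProduct, sq]

theorem sum_mulVec_sq_le_of_eigenvalues_le [DecidableEq n] (B : Matrix m n ℝ)
    (hB : (Bᵀ * B).IsHermitian) {c : ℝ} (hc : ∀ i, hB.eigenvalues i ≤ c) (x : n → ℝ) :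
    ∑ i, (B *ᵥ x) i ^ 2 ≤ c * ∑ i, x i ^ 2 := by
  rw [sum_mulVec_sq_eq_dotProduct]
  simpa only [dotProduct, ← sq] using
    dotProduct_mulVec_le_of_le_algebraMap (hB.le_algebraMap_of_eigenvalues_le hc) x

theorem sum_fromRows_mulVec_sq {m' : Type*} [Fintype m'] (B : Matrix m n ℝ) (C : Matrix m' n ℝ)
    (x : n → ℝ) :
    ∑ a, (fromRows B C *ᵥ x) a ^ 2 = ∑ i, (B *ᵥ x) i ^ 2 + ∑ i, (C *ᵥ x) i ^ 2 := by
  simp only [fromRows_mulVec, Fintype.sum_sum_type, Sum.elim_inl, Sum.elim_inr]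

theorem sum_sigma_blocks_mulVec_sq {ι : Type*} [Fintype ι] {k : ι → Type*} [∀ j, Fintype (k j)]
    (Bs : ∀ j, Matrix (k j) n ℝ) (x : n → ℝ) :
    ∑ p, (of (fun p : Σ j, k j => Bs p.1 p.2) *ᵥ x) p ^ 2 = ∑ j, ∑ i, (Bs j *ᵥ x) i ^ 2 :=
  Fintype.sum_sigma _

end Matrix

theorem stmt_8_general (ε : ℝ) (m : ℕ) (hm : 1 ≤ m)
    (ℓ d : ℕ) (k : Fin m → ℕ)
    (B : Matrix (Fin ℓ) (Fin d) ℝ)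
    (Bs : ∀ j : Fin m, Matrix (Fin (k j)) (Fin d) ℝ)
    (A : Matrix (Fin ℓ ⊕ (Σ j : Fin m, Fin (k j))) (Fin d) ℝ)
    (hA : A = Matrix.fromRows B (Matrix.of fun (p : Σ j : Fin m, Fin (k j)) => Bs p.1 p.2))
    (hherm : ∀ j : Fin m, ((Bs j)ᵀ * Bs j).IsHermitian)
    (heval : ∀ (j : Fin m) (i : Fin d),
      (hherm j).eigenvalues i ≤ (ε / m) * ∑ a, ∑ b, (A a b) ^ 2) :
    ∀ x : Fin d → ℝ, (∑ c, (x c) ^ 2) = 1 →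
      (∑ a, (A.mulVec x a) ^ 2) - ε * (∑ a, ∑ b, (A a b) ^ 2) ≤ ∑ i, (B.mulVec x i) ^ 2 ∧
      (∑ i, (B.mulVec x i) ^ 2) ≤ ∑ a, (A.mulVec x a) ^ 2 := by
  intro x hx
  set F := ∑ a, ∑ b, (A a b) ^ 2
  have hsplit : ∑ a, (A *ᵥ x) a ^ 2 = ∑ i, (B *ᵥ x) i ^ 2 + ∑ j, ∑ i, (Bs j *ᵥ x) i ^ 2 := by
    rw [hA, sum_fromRows_mulVec_sq, sum_sigma_blocks_mulVec_sq]
  have hsite (j : Fin m) : ∑ i, (Bs j *ᵥ x) i ^ 2 ≤ ε / m * F := by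
    simpa only [hx, mul_one] using sum_mulVec_sq_le_of_eigenvalues_le (Bs j) (hherm j) (heval j) x
  have hsites : ∑ j, ∑ i, (Bs j *ᵥ x) i ^ 2 ≤ ε * F := calc
    _ ≤ ∑ _j : Fin m, ε / m * F := Finset.sum_le_sum fun j _ => hsite j
    _ = ε * F := by
      have hm0 : (m : ℝ) ≠ 0 := Nat.cast_ne_zero.mpr (by omega)
      rw [Finset.sum_const, Finset.card_univ, Fintype.card_fin, nsmul_eq_mul, ← mul_assoc,
        mul_div_cancel₀ ε hm0]
  have hsites_nonneg : 0 ≤ ∑ j, ∑ i, (Bs j *ᵥ x) i ^ 2 := by positivity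
  constructor <;> linarith

/-- The invariant of the deterministic matrix-tracking protocol P2: if `A` is the stacking of
the coordinator's matrix `B` with the residual site matrices `B_1, …, B_m`, and every
eigenvalue of each `B_jᵀB_j` (i.e. each squared singular value of `B_j`) is at most
`(ε/m)·‖A‖_F²`, then for every unit vector `x`,
`‖Ax‖² - ε‖A‖_F² ≤ ‖Bx‖² ≤ ‖Ax‖²`. -/
theorem stmt_8 (ε : ℝ) (hε : 0 ≤ ε) (m : ℕ) (hm : 1 ≤ m)
    (ℓ d : ℕ) (k : Fin m → ℕ)
    (B : Matrix (Fin ℓ) (Fin d) ℝ)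
    (Bs : ∀ j : Fin m, Matrix (Fin (k j)) (Fin d) ℝ)
    (A : Matrix (Fin ℓ ⊕ (Σ j : Fin m, Fin (k j))) (Fin d) ℝ)
    (hA : A = Matrix.fromRows B (Matrix.of fun (p : Σ j : Fin m, Fin (k j)) => Bs p.1 p.2))
    (hherm : ∀ j : Fin m, ((Bs j)ᵀ * Bs j).IsHermitian)
    (heval : ∀ (j : Fin m) (i : Fin d),
      (hherm j).eigenvalues i ≤ (ε / m) * ∑ a, ∑ b, (A a b) ^ 2) :
    ∀ x : Fin d → ℝ, (∑ c, (x c) ^ 2) = 1 →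
      (∑ a, (A.mulVec x a) ^ 2) - ε * (∑ a, ∑ b, (A a b) ^ 2) ≤ ∑ i, (B.mulVec x i) ^ 2 ∧
      (∑ i, (B.mulVec x i) ^ 2) ≤ ∑ a, (A.mulVec x a) ^ 2 :=
  stmt_8_general ε m hm ℓ d k B Bs A hA hherm heval
end
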